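/- For the truncated discrete Laplace distribution DLap_τ(ε) with τ = ⌈(1/ε) · log((e^{ε} + 2δ - 1) / ((e^{ε} + 1)δ))⌉ where 0 < δ < 1 and ε > 0, a count of 1 is released with probability at most δ: if Z ∼ DLap_τ(ε), then Pr[1 + Z > τ] = Pr[Z = τ] = β_{ε,τ} e^{-ετ} ≤ δ. -/

import Mathlib

/-! With `x = e^{-ετ}`, multiplying numerator and denominator by `e^ε` turns `β_{ε,τ} e^{-ετ}`
into `(e^ε - 1) x / (e^ε + 1 - 2x)`, which is at most `δ` as soon as
`x ≤ δ (e^ε + 1) / (e^ε + 2δ - 1)`; the ceiling in `τ` is chosen precisely to force this. -/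

open Real

/-- The constant `β_{ε,t}` of `DLap_t(ε)`. -/
noncomputable def truncDLapNormConst (ε t : ℝ) : ℝ :=
  (1 - exp (-ε)) / (1 + exp (-ε) - 2 * exp (-ε * (t + 1)))

lemma truncDLapNormConst_mul_exp (ε t : ℝ) :
    truncDLapNormConst ε t * exp (-ε * t) =
      (exp ε - 1) * exp (-ε * t) / (exp ε + 1 - 2 * exp (-ε * t)) := by
  have hsplit : exp (-ε * (t + 1)) = exp (-ε) * exp (-ε * t) := by
    rw [← exp_add]; ring_nf
  have hinv : exp ε * exp (-ε) = 1 := by rw [← exp_add, add_neg_cancel, exp_zero]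
  rw [truncDLapNormConst, div_mul_eq_mul_div, hsplit, ← mul_div_mul_left _ _ (exp_pos ε).ne']
  congr 1
  · linear_combination -exp (-ε * t) * hinv
  · linear_combination (1 - 2 * exp (-ε * t)) * hinv

lemma truncDLapNormConst_mul_exp_le {ε δ t : ℝ} (hε : 0 < ε) (hδ : 0 < δ)
    (ht : exp (-ε * t) ≤ (exp ε + 1) * δ / (exp ε + 2 * δ - 1)) :
    truncDLapNormConst ε t * exp (-ε * t) ≤ δ := by
  have hq : 1 < exp ε := one_lt_exp_iff.mpr hε
  have hpos : 0 < exp ε + 2 * δ - 1 := by linarith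
  rw [le_div_iff₀ hpos] at ht
  -- the bound on `exp (-ε t)` keeps it below `(e^ε + 1) / 2`, so the denominator is positive
  have hden : 0 < exp ε + 1 - 2 * exp (-ε * t) := by nlinarith
  rw [truncDLapNormConst_mul_exp, div_le_iff₀ hden]
  linarith

lemma exp_neg_mul_ceil_le_inv {ε R : ℝ} (hε : 0 < ε) (hR : 0 < R) :
    exp (-ε * ⌈(1 / ε) * log R⌉) ≤ R⁻¹ := by
  have hceil : log R ≤ ε * ⌈(1 / ε) * log R⌉ := by
    rw [← div_le_iff₀' hε, ← one_div_mul_eq_div]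
    exact Int.le_ceil _
  calc exp (-ε * ⌈(1 / ε) * log R⌉) ≤ exp (-log R) := exp_le_exp.mpr (by linarith)
    _ = R⁻¹ := by rw [exp_neg, exp_log hR]

theorem truncated_dlap_count_one_release_prob_general (ε δ : ℝ) (hε : 0 < ε)
    (hδ0 : 0 < δ)
    (τ : ℤ)
    (hτ : τ = ⌈(1 / ε) * Real.log ((Real.exp ε + 2 * δ - 1) / ((Real.exp ε + 1) * δ))⌉) :
    ((1 - Real.exp (-ε)) / (1 + Real.exp (-ε) - 2 * Real.exp (-ε * (τ + 1)))) *
      Real.exp (-ε * τ) ≤ δ := by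
  have hR : 0 < (exp ε + 2 * δ - 1) / ((exp ε + 1) * δ) := by
    have := one_lt_exp_iff.mpr hε
    apply div_pos <;> nlinarith
  refine truncDLapNormConst_mul_exp_le hε hδ0 ?_
  simpa only [hτ, inv_div] using exp_neg_mul_ceil_le_inv hε hR

/-- With `τ = ⌈(1/ε) log((e^ε + 2δ - 1)/((e^ε + 1)δ))⌉`, the truncated discrete
Laplace distribution releases a count of `1` with probability at most `δ`:
`Pr[1 + Z > τ] = Pr[Z = τ] = β_{ε,τ} e^{-ετ} ≤ δ`. -/
theorem truncated_dlap_count_one_release_prob (ε δ : ℝ) (hε : 0 < ε)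
    (hδ0 : 0 < δ) (hδ1 : δ < 1)
    (τ : ℤ)
    (hτ : τ = ⌈(1 / ε) * Real.log ((Real.exp ε + 2 * δ - 1) / ((Real.exp ε + 1) * δ))⌉) :
    ((1 - Real.exp (-ε)) / (1 + Real.exp (-ε) - 2 * Real.exp (-ε * (τ + 1)))) *
      Real.exp (-ε * τ) ≤ δ :=
  truncated_dlap_count_one_release_prob_general ε δ hε hδ0 τ hτ
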